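/- (Proposition 1, zero-threshold part.) If ‖z‖₂ ≤ Δ, then 0 is a global minimizer of the proximal objective F, i.e., F(0) ≤ F(x) for all x ∈ ℝ^r. -/

import Mathlib

open Real Filter

/-- Unnormalized multivariate Laplace kernel `Ψ(x | λ) = λ^r exp(−λ‖x‖₂)` on `ℝ^r`. -/
noncomputable def Psi (r : ℕ) (lam : ℝ) (x : EuclideanSpace ℝ (Fin r)) : ℝ :=
  lam ^ r * Real.exp (-lam * ‖x‖)

/-- Slab posterior-inclusion weight `p*(x)`. -/
noncomputable def pstar (r : ℕ) (lam0 lam1 th : ℝ) (x : EuclideanSpace ℝ (Fin r)) : ℝ :=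
  th * Psi r lam1 x / ((1 - th) * Psi r lam0 x + th * Psi r lam1 x)

/-- Adaptive shrinkage weight `λ*(x) = λ₁ p*(x) + λ₀ (1 − p*(x))`. -/
noncomputable def lamstar (r : ℕ) (lam0 lam1 th : ℝ) (x : EuclideanSpace ℝ (Fin r)) : ℝ :=
  lam1 * pstar r lam0 lam1 th x + lam0 * (1 - pstar r lam0 lam1 th x)

/-- Centered SSGL penalty `pen(x) = −λ₁‖x‖₂ + log(p*(0)/p*(x))`. -/
noncomputable def pen (r : ℕ) (lam0 lam1 th : ℝ) (x : EuclideanSpace ℝ (Fin r)) : ℝ :=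
  -lam1 * ‖x‖ + Real.log (pstar r lam0 lam1 th 0 / pstar r lam0 lam1 th x)

/-- The threshold `Δ = inf_{x ≠ 0} ( ‖x‖₂/2 − η·pen(x)/‖x‖₂ )`. -/
noncomputable def Delta (r : ℕ) (lam0 lam1 th η : ℝ) : ℝ :=
  sInf {v : ℝ | ∃ x : EuclideanSpace ℝ (Fin r), x ≠ 0 ∧
    v = ‖x‖ / 2 - η * pen r lam0 lam1 th x / ‖x‖}

/-- The proximal objective `F(x) = (1/(2η))‖x − z‖₂² − pen(x)`. -/
noncomputable def Fobj (r : ℕ) (lam0 lam1 th η : ℝ)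
    (z x : EuclideanSpace ℝ (Fin r)) : ℝ :=
  1 / (2 * η) * ‖x - z‖ ^ 2 - pen r lam0 lam1 th x

lemma psi_pos (r : ℕ) (lam : ℝ) (h : 0 < lam) (x : EuclideanSpace ℝ (Fin r)) :
    0 < Psi r lam x := mul_pos (pow_pos h r) (Real.exp_pos _)

lemma pstar_pos (r : ℕ) (lam0 lam1 th : ℝ) (hlam0 : 0 < lam0) (hlam1 : 0 < lam1)
    (hth0 : 0 < th) (hth1 : th < 1) (x : EuclideanSpace ℝ (Fin r)) :
    0 < pstar r lam0 lam1 th x := by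
  unfold pstar
  exact div_pos (mul_pos hth0 (psi_pos r lam1 hlam1 x))
    (add_pos (mul_pos (by linarith) (psi_pos r lam0 hlam0 x))
      (mul_pos hth0 (psi_pos r lam1 hlam1 x)))

lemma pstar_zero_le (r : ℕ) (lam0 lam1 th : ℝ) (hlam1 : 0 < lam1) (hlam : lam1 < lam0)
    (hth0 : 0 < th) (hth1 : th < 1) (x : EuclideanSpace ℝ (Fin r)) :
    pstar r lam0 lam1 th 0 ≤ pstar r lam0 lam1 th x := by
  have hlam0 : 0 < lam0 := hlam1.trans hlam
  have h1x := psi_pos r lam1 hlam1 x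
  have h0x := psi_pos r lam0 hlam0 x
  have h10 := psi_pos r lam1 hlam1 (0 : EuclideanSpace ℝ (Fin r))
  have h00 := psi_pos r lam0 hlam0 (0 : EuclideanSpace ℝ (Fin r))
  unfold pstar
  rw [div_le_div_iff₀ (by nlinarith) (by nlinarith)]
  have key : Psi r lam1 0 * Psi r lam0 x ≤ Psi r lam1 x * Psi r lam0 0 := by
    unfold Psi
    have hn : (0:ℝ) ≤ ‖x‖ := norm_nonneg x
    have : Real.exp (-lam0 * ‖x‖) ≤ Real.exp (-lam1 * ‖x‖) := by
      apply Real.exp_le_exp.2; nlinarith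
    simp only [norm_zero, mul_zero, Real.exp_zero]
    have p1 : (0:ℝ) < lam1 ^ r := pow_pos hlam1 r
    have p0 : (0:ℝ) < lam0 ^ r := pow_pos hlam0 r
    nlinarith [mul_pos p1 p0]
  nlinarith [mul_pos hth0 (sub_pos.2 hth1)]

lemma pen_nonpos (r : ℕ) (lam0 lam1 th : ℝ) (hlam1 : 0 < lam1) (hlam : lam1 < lam0)
    (hth0 : 0 < th) (hth1 : th < 1) (x : EuclideanSpace ℝ (Fin r)) :
    pen r lam0 lam1 th x ≤ 0 := by
  have hlam0 : 0 < lam0 := hlam1.trans hlam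
  have hx := pstar_pos r lam0 lam1 th hlam0 hlam1 hth0 hth1 x
  have h0 := pstar_pos r lam0 lam1 th hlam0 hlam1 hth0 hth1 (0 : EuclideanSpace ℝ (Fin r))
  have hlog : Real.log (pstar r lam0 lam1 th 0 / pstar r lam0 lam1 th x) ≤ 0 := by
    apply Real.log_nonpos (by positivity)
    rw [div_le_one hx]
    exact pstar_zero_le r lam0 lam1 th hlam1 hlam hth0 hth1 x
  have : -lam1 * ‖x‖ ≤ 0 := by nlinarith [norm_nonneg x]
  unfold pen; linarith

lemma pen_zero (r : ℕ) (lam0 lam1 th : ℝ) (hlam1 : 0 < lam1) (hlam : lam1 < lam0)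
    (hth0 : 0 < th) (hth1 : th < 1) :
    pen r lam0 lam1 th 0 = 0 := by
  have hlam0 : 0 < lam0 := hlam1.trans hlam
  have h0 := pstar_pos r lam0 lam1 th hlam0 hlam1 hth0 hth1 (0 : EuclideanSpace ℝ (Fin r))
  unfold pen
  rw [div_self (ne_of_gt h0), Real.log_one, norm_zero]
  ring

/-- Proposition 1, zero-threshold part: if `‖z‖₂ ≤ Δ` then `0` is a global
minimizer of the proximal objective `F`. -/
theorem stmt_6 (r : ℕ) (hr : 1 ≤ r) (lam0 lam1 th : ℝ)
    (hlam1 : 0 < lam1) (hlam : lam1 < lam0) (hth0 : 0 < th) (hth1 : th < 1)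
    (η : ℝ) (hη : 0 < η) (z : EuclideanSpace ℝ (Fin r))
    (hz : ‖z‖ ≤ Delta r lam0 lam1 th η) :
    ∀ x : EuclideanSpace ℝ (Fin r),
      Fobj r lam0 lam1 th η z 0 ≤ Fobj r lam0 lam1 th η z x := by
  intro x
  by_cases hx : x = 0
  · subst hx; exact le_rfl
  · have hn : (0:ℝ) < ‖x‖ := norm_pos_iff.mpr hx
    have hbdd : BddBelow {v : ℝ | ∃ y : EuclideanSpace ℝ (Fin r), y ≠ 0 ∧
        v = ‖y‖ / 2 - η * pen r lam0 lam1 th y / ‖y‖} := by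
      refine ⟨0, ?_⟩
      rintro v ⟨y, hy, rfl⟩
      have hny : (0:ℝ) < ‖y‖ := norm_pos_iff.mpr hy
      have hpen := pen_nonpos r lam0 lam1 th hlam1 hlam hth0 hth1 y
      have : η * pen r lam0 lam1 th y / ‖y‖ ≤ 0 :=
        div_nonpos_of_nonpos_of_nonneg (mul_nonpos_of_nonneg_of_nonpos hη.le hpen) hny.le
      linarith
    have hmem : (‖x‖ / 2 - η * pen r lam0 lam1 th x / ‖x‖) ∈ {v : ℝ |
        ∃ y : EuclideanSpace ℝ (Fin r), y ≠ 0 ∧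
        v = ‖y‖ / 2 - η * pen r lam0 lam1 th y / ‖y‖} := ⟨x, hx, rfl⟩
    have hΔ : Delta r lam0 lam1 th η ≤ ‖x‖ / 2 - η * pen r lam0 lam1 th x / ‖x‖ :=
      csInf_le hbdd hmem
    have hz' : ‖z‖ ≤ ‖x‖ / 2 - η * pen r lam0 lam1 th x / ‖x‖ := hz.trans hΔ
    have key : ‖z‖ * ‖x‖ ≤ ‖x‖ ^ 2 / 2 - η * pen r lam0 lam1 th x := by
      have h2 := mul_le_mul_of_nonneg_right hz' hn.le
      have : (‖x‖ / 2 - η * pen r lam0 lam1 th x / ‖x‖) * ‖x‖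
          = ‖x‖ ^ 2 / 2 - η * pen r lam0 lam1 th x := by
        field_simp
      linarith [this ▸ h2]
    have hip := real_inner_le_norm x z
    have hsq := norm_sub_sq_real x z
    have hfinal : ‖z‖ ^ 2 + 2 * η * pen r lam0 lam1 th x ≤ ‖x - z‖ ^ 2 := by
      nlinarith
    unfold Fobj
    rw [zero_sub, norm_neg, pen_zero r lam0 lam1 th hlam1 hlam hth0 hth1]
    have hpos : (0:ℝ) < 1 / (2 * η) := by positivity
    have h3 := mul_le_mul_of_nonneg_left hfinal hpos.le
    have heq : 1 / (2 * η) * (2 * η * pen r lam0 lam1 th x) = pen r lam0 lam1 th x := by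
      field_simp
    rw [mul_add, heq] at h3
    linarith
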